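/- For every vertex-weighted graph $(G, w)$ with $w \geq 0$, the Lovász theta number is at most the fractional packing number: $\vartheta(G, w) \leq \alpha^*(G, w)$, where $\alpha^*(G, w) = \max\{\sum_i w_i x_i : x \geq 0,\ \sum_{i \in C} x_i \leq 1 \text{ for every clique } C \text{ of } G\}$. -/

import Mathlib

/-!
The diagonal of `X` is itself a point of the fractional stable set polytope. For a clique `C`,
evaluating the quadratic form of `X` at `e₀ - 𝟙_C` gives `X₀₀ - ∑_{i ∈ C} Xᵢᵢ ≥ 0`, because
`X₀ᵢ = Xᵢᵢ` and the off-diagonal entries of `X` inside `C` vanish.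
-/

open Finset Matrix

theorem Matrix.PosSemidef.sum_diag_le_of_pairwise_orthogonal {ι : Type*} [Fintype ι]
    [DecidableEq ι] {X : Matrix ι ι ℝ} (hX : X.PosSemidef) {o : ι} {S : Finset ι}
    (hdiag : ∀ i ∈ S, X i i = X o i) (horth : ∀ i ∈ S, ∀ j ∈ S, i ≠ j → X i j = 0) :
    ∑ i ∈ S, X i i ≤ X o o := by
  have hentry : ∀ a b, Pi.single a (1 : ℝ) ⬝ᵥ X *ᵥ Pi.single b 1 = X a b := fun a b => by
    rw [mulVec_single_one, single_dotProduct, one_mul]; rfl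
  have hsymm : ∀ i, X i o = X o i := fun i => by simpa using hX.isHermitian.apply o i
  have hcross : ∑ i ∈ S, ∑ j ∈ S, X j i = ∑ i ∈ S, X o i :=
    sum_congr rfl fun i hi =>
      (sum_eq_single_of_mem i hi fun j hj hji => horth j hj i hi hji).trans (hdiag i hi)
  have hquad : (Pi.single o 1 - ∑ i ∈ S, Pi.single i 1) ⬝ᵥ X *ᵥ
      (Pi.single o 1 - ∑ i ∈ S, Pi.single i 1) = X o o - ∑ i ∈ S, X i i := by
    simp only [mulVec_sub, mulVec_sum, sub_dotProduct, dotProduct_sub, sum_dotProduct,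
      dotProduct_sum, hentry, hsymm, sum_sub_distrib, hcross, sum_congr rfl hdiag]
    ring
  have hnonneg := hX.dotProduct_mulVec_nonneg (Pi.single o 1 - ∑ i ∈ S, Pi.single i 1)
  rw [star_trivial, hquad] at hnonneg
  linarith

theorem lovasz_theta_le_fractional_packing
    (n : ℕ) (G : SimpleGraph (Fin n)) (w : Fin n → ℝ)
    (X : Matrix (Fin 1 ⊕ Fin n) (Fin 1 ⊕ Fin n) ℝ)
    (hX : X.PosSemidef)
    (h00 : X (Sum.inl 0) (Sum.inl 0) = 1)
    (hdiag : ∀ i, X (Sum.inr i) (Sum.inr i) = X (Sum.inl 0) (Sum.inr i))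
    (hadj : ∀ i j, G.Adj i j → X (Sum.inr i) (Sum.inr j) = 0) :
    ∃ x : Fin n → ℝ, (∀ i, 0 ≤ x i) ∧
      (∀ C : Finset (Fin n), (∀ i ∈ C, ∀ j ∈ C, i ≠ j → G.Adj i j) →
        ∑ i ∈ C, x i ≤ 1) ∧
      ∑ i, w i * X (Sum.inr i) (Sum.inr i) ≤ ∑ i, w i * x i := by
  refine ⟨fun i => X (Sum.inr i) (Sum.inr i), fun i => hX.diag_nonneg, fun C hC => ?_, le_rfl⟩
  have hclique := hX.sum_diag_le_of_pairwise_orthogonal (o := Sum.inl 0)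
    (S := C.map .inr) (by simp [hdiag])
    (by simpa using fun i hi j hj hij => hadj i j (hC i hi j hj hij))
  simpa [h00] using hclique
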